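/- Let κ have uncountable cofinality, X ⊆ [ω]^ω with X ∪ Fin κ-concentrated on Fin, and φ : X ∪ Fin → ω^ω continuous. Then there is A ⊆ X with |A| < κ such that the image φ[(X ∖ A) ∪ Fin] is guessable, i.e., there exists g ∈ ω^ω with {n : f(n) = g(n)} infinite for every f in the image. -/

import Mathlib

/-!
Enumerate the countable set `Fin` as `s 0, s 1, …` and let the guess read `φ (s j)` on the
`j`-th column of `ℕ ≅ ℕ × ℕ`. By continuity, for every `j` and `k` some neighbourhood of `s j`
agrees with `s j` at the point `⟨j, k⟩`; the union `U k` over `j` of these neighbourhoods is an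
open set containing `Fin`, so by concentration only fewer than `κ` points of `X` miss `U k`.
Since `κ` has uncountable cofinality, fewer than `κ` points miss some `U k`, and every other
point agrees with the guess at some `⟨j, k⟩` for each `k`, hence infinitely often.
-/

open Set Cardinal

/-- The finite subsets of ω, as a subset of Cantor space `ℕ → Bool`. -/
def FinS : Set (ℕ → Bool) := {x | {n | x n = true}.Finite}

universe u

theorem Cardinal.mk_iUnion_lt_of_aleph0_lt_cof {α ι : Type u} [Countable ι] {κ : Cardinal.{u}}
    (hκ : ℵ₀ < κ.ord.cof) {B : ι → Set α} (hB : ∀ i, #(B i) < κ) : #(⋃ i, B i) < κ := by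
  have hι : #ι < κ.ord.cof := mk_le_aleph0.trans_lt hκ
  have hκ₀ : ℵ₀ ≤ κ := (hκ.trans_le (Ordinal.cof_ord_le κ)).le
  exact (mk_iUnion_le B).trans_lt <| mul_lt_of_lt hκ₀ (hι.trans_le (Ordinal.cof_ord_le κ))
    (iSup_lt_of_lt_cof_ord hι hB)

theorem ContinuousWithinAt.exists_isOpen_apply_eq {Y ι α : Type*} [TopologicalSpace Y]
    [TopologicalSpace α] [DiscreteTopology α] {φ : Y → ι → α} {Z : Set Y} {y : Y}
    (hφ : ContinuousWithinAt φ Z y) (i : ι) :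
    ∃ V : Set Y, IsOpen V ∧ y ∈ V ∧ ∀ x ∈ V ∩ Z, φ x i = φ y i := by
  have h := ((continuous_apply i).continuousAt.comp_continuousWithinAt hφ).preimage_mem_nhdsWithin
    (isOpen_discrete {φ y i} |>.mem_nhds rfl)
  obtain ⟨V, hVopen, hyV, hVsub⟩ := mem_nhdsWithin.1 h
  exact ⟨V, hVopen, hyV, hVsub⟩

theorem ContinuousOn.exists_guess_on_iInter {Y α : Type*} [TopologicalSpace Y]
    [TopologicalSpace α] [DiscreteTopology α] {φ : Y → ℕ → α} {Z : Set Y}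
    (hφ : ContinuousOn φ Z) (s : ℕ → Y) (hs : ∀ j, s j ∈ Z) :
    ∃ U : ℕ → Set Y, (∀ k, IsOpen (U k)) ∧ (∀ k, range s ⊆ U k) ∧
      ∃ g : ℕ → α, ∀ x ∈ Z ∩ ⋂ k, U k, {n | φ x n = g n}.Infinite := by
  choose V hVopen hsV hV using fun j k ↦ (hφ (s j) (hs j)).exists_isOpen_apply_eq (Nat.pair j k)
  refine ⟨fun k ↦ ⋃ j, V j k, fun k ↦ isOpen_iUnion (hVopen · k),
    fun k ↦ range_subset_iff.2 fun j ↦ mem_iUnion_of_mem j (hsV j k),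
    fun n ↦ φ (s n.unpair.1) n, fun x ⟨hxZ, hxU⟩ ↦ ?_⟩
  refine infinite_of_forall_exists_gt fun k ↦ ?_
  obtain ⟨j, hj⟩ := mem_iUnion.1 (mem_iInter.1 hxU (k + 1))
  refine ⟨Nat.pair j (k + 1), ?_, (Nat.lt_succ_self k).trans_le (Nat.right_le_pair j (k + 1))⟩
  simpa [Nat.unpair_pair] using hV j (k + 1) x ⟨hj, hxZ⟩

theorem countable_finS : FinS.Countable := by
  have hinj : Function.Injective fun (x : ℕ → Bool) ↦ {n | x n = true} := fun x y h ↦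
    funext fun n ↦ Bool.eq_iff_iff.2 (Set.ext_iff.1 h n)
  exact (Set.Countable.ofPred_finite (α := ℕ)).preimage hinj

theorem nonempty_finS : FinS.Nonempty := ⟨fun _ ↦ false, by simp [FinS]⟩

theorem stmt8_general (κ : Cardinal) (hκ : Cardinal.aleph0 < κ.ord.cof)
    (X : Set (ℕ → Bool))
    (hconc : κ ≤ Cardinal.mk ↥(X ∪ FinS) ∧
      ∀ U : Set (ℕ → Bool), IsOpen U → FinS ⊆ U →
        Cardinal.mk ↥((X ∪ FinS) \ U) < κ)
    (φ : (ℕ → Bool) → (ℕ → ℕ)) (hφ : ContinuousOn φ (X ∪ FinS)) :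
    ∃ A ⊆ X, Cardinal.mk A < κ ∧
      ∃ g : ℕ → ℕ, ∀ x ∈ (X \ A) ∪ FinS, {n | φ x n = g n}.Infinite := by
  obtain ⟨s, hs⟩ := countable_finS.exists_eq_range nonempty_finS
  obtain ⟨U, hUopen, hsU, g, hg⟩ :=
    hφ.exists_guess_on_iInter s fun j ↦ subset_union_right (hs ▸ mem_range_self j)
  have hFinU : ∀ k, FinS ⊆ U k := fun k ↦ hs ▸ hsU k
  refine ⟨⋃ k, X \ U k, iUnion_subset fun k ↦ sdiff_subset, ?_, g, fun x hx ↦ hg x ?_⟩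
  · refine mk_iUnion_lt_of_aleph0_lt_cof hκ fun k ↦ ?_
    exact (mk_le_mk_of_subset (sdiff_subset_sdiff_left subset_union_left)).trans_lt
      (hconc.2 (U k) (hUopen k) (hFinU k))
  · rcases hx with ⟨hxX, hxA⟩ | hxF
    · simp only [mem_iUnion, mem_sdiff, not_exists, not_and, not_not] at hxA
      exact ⟨Or.inl hxX, mem_iInter.2 (hxA · hxX)⟩
    · exact ⟨Or.inr hxF, mem_iInter.2 (hFinU · hxF)⟩

/-- if `X ∪ Fin` is κ-concentrated on `Fin` (κ of uncountable
cofinality) and `φ : X ∪ Fin → ω^ω` is continuous, then for some `A ⊆ X` with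
`|A| < κ` the image `φ[(X ∖ A) ∪ Fin]` is guessable. -/
theorem stmt8 (κ : Cardinal) (hκ : Cardinal.aleph0 < κ.ord.cof)
    (X : Set (ℕ → Bool)) (hX : ∀ x ∈ X, {n | x n = true}.Infinite)
    (hconc : κ ≤ Cardinal.mk ↥(X ∪ FinS) ∧
      ∀ U : Set (ℕ → Bool), IsOpen U → FinS ⊆ U →
        Cardinal.mk ↥((X ∪ FinS) \ U) < κ)
    (φ : (ℕ → Bool) → (ℕ → ℕ)) (hφ : ContinuousOn φ (X ∪ FinS)) :
    ∃ A ⊆ X, Cardinal.mk A < κ ∧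
      ∃ g : ℕ → ℕ, ∀ x ∈ (X \ A) ∪ FinS, {n | φ x n = g n}.Infinite :=
  stmt8_general κ hκ X hconc φ hφ
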